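/- Let W be a simple object of C. Then either F(W) is a simple object of R, or there exists a simple object V of R such that F(W) ≅ V ⊕ V in R, E(V) ≅ W in C, and W ≅ B(W) in C. -/

import Mathlib

set_option linter.unusedSectionVars false

open CategoryTheory CategoryTheory.Limits

universe v u

variable (R : Type u) [Category.{v} R] [Abelian R] [CategoryTheory.Linear ℝ R]

/-- Objects of the category `C`: pairs `(V, ι)` with `ι ∘ ι = -1`. -/
structure CObj : Type max u v where
  V : R
  ι : V ⟶ V
  hι : ι ≫ ι = -𝟙 V

variable {R}

instance : Category.{v} (CObj R) where
  Hom W₁ W₂ := { φ : W₁.V ⟶ W₂.V // W₁.ι ≫ φ = φ ≫ W₂.ι }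
  id W := ⟨𝟙 W.V, by simp⟩
  comp f g := ⟨f.1 ≫ g.1, by
    rw [← Category.assoc, f.2, Category.assoc, g.2, Category.assoc]⟩
  id_comp f := Subtype.ext (Category.id_comp f.1)
  comp_id f := Subtype.ext (Category.comp_id f.1)
  assoc f g h := Subtype.ext (Category.assoc f.1 g.1 h.1)

@[ext]
lemma CObj.hom_ext {W₁ W₂ : CObj R} {f g : W₁ ⟶ W₂} (h : f.1 = g.1) : f = g :=
  Subtype.ext h

@[simp]
lemma CObj.id_coe (W : CObj R) : (𝟙 W : W ⟶ W).1 = 𝟙 W.V := rfl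

@[simp]
lemma CObj.comp_coe {W₁ W₂ W₃ : CObj R} (f : W₁ ⟶ W₂) (g : W₂ ⟶ W₃) :
    (f ≫ g).1 = f.1 ≫ g.1 := rfl

instance (W₁ W₂ : CObj R) : Zero (W₁ ⟶ W₂) := ⟨⟨0, by simp⟩⟩

instance (W₁ W₂ : CObj R) : Add (W₁ ⟶ W₂) :=
  ⟨fun f g => ⟨f.1 + g.1, by rw [Preadditive.comp_add, Preadditive.add_comp, f.2, g.2]⟩⟩

instance (W₁ W₂ : CObj R) : Neg (W₁ ⟶ W₂) :=
  ⟨fun f => ⟨-f.1, by rw [Preadditive.comp_neg, Preadditive.neg_comp, f.2]⟩⟩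

instance (W₁ W₂ : CObj R) : Sub (W₁ ⟶ W₂) :=
  ⟨fun f g => ⟨f.1 - g.1, by rw [Preadditive.comp_sub, Preadditive.sub_comp, f.2, g.2]⟩⟩

instance (W₁ W₂ : CObj R) : SMul ℕ (W₁ ⟶ W₂) :=
  ⟨fun n f => ⟨n • f.1, by rw [Linear.comp_smul, Linear.smul_comp, f.2]⟩⟩

instance (W₁ W₂ : CObj R) : SMul ℤ (W₁ ⟶ W₂) :=
  ⟨fun n f => ⟨n • f.1, by rw [Linear.comp_smul, Linear.smul_comp, f.2]⟩⟩

@[simp] lemma CObj.zero_coe (W₁ W₂ : CObj R) : (0 : W₁ ⟶ W₂).1 = 0 := rfl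
@[simp] lemma CObj.add_coe {W₁ W₂ : CObj R} (f g : W₁ ⟶ W₂) : (f + g).1 = f.1 + g.1 := rfl
@[simp] lemma CObj.neg_coe {W₁ W₂ : CObj R} (f : W₁ ⟶ W₂) : (-f).1 = -f.1 := rfl

instance (W₁ W₂ : CObj R) : AddCommGroup (W₁ ⟶ W₂) :=
  Function.Injective.addCommGroup (fun f : W₁ ⟶ W₂ => f.1) Subtype.val_injective
    rfl (fun _ _ => rfl) (fun _ => rfl) (fun _ _ => rfl) (fun _ _ => rfl) (fun _ _ => rfl)

instance : Preadditive (CObj R) where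
  add_comp P Q S f f' g := by apply Subtype.ext; exact Preadditive.add_comp _ _ _ f.1 f'.1 g.1
  comp_add P Q S f g g' := by apply Subtype.ext; exact Preadditive.comp_add _ _ _ f.1 g.1 g'.1

variable (R)

/-- The conjugation functor `B : C → C`. -/
def Bfunctor : CObj R ⥤ CObj R where
  obj W := ⟨W.V, -W.ι, by simp [W.hι]⟩
  map f := ⟨f.1, by simp [f.2]⟩
  map_id _ := rfl
  map_comp _ _ := rfl

/-- The forgetful functor `F : C → R`. -/
def Ffunctor : CObj R ⥤ R where
  obj W := W.V
  map f := f.1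
  map_id _ := rfl
  map_comp _ _ := rfl

/-- The complexification functor `E : R → C`. -/
noncomputable def Efunctor : R ⥤ CObj R where
  obj V :=
    { V := V ⊞ V
      ι := -(biprod.snd ≫ biprod.inl) + biprod.fst ≫ biprod.inr
      hι := by ext <;> simp }
  map φ := ⟨biprod.map φ φ, by ext <;> simp⟩
  map_id V := Subtype.ext (by ext <;> simp)
  map_comp f g := Subtype.ext (by ext <;> simp)

variable {R}

/-- The biproduct `(V₁ ⊕ V₂, ι₁ ⊕ ι₂)` of two objects of `C`. -/
noncomputable def csum (W₁ W₂ : CObj R) : CObj R where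
  V := W₁.V ⊞ W₂.V
  ι := biprod.map W₁.ι W₂.ι
  hι := by ext <;> simp [W₁.hι, W₂.hι]

/-- Multiplication by `i` as a morphism in `C`. -/
def iMor (W : CObj R) : W ⟶ W := ⟨W.ι, rfl⟩

open scoped TensorProduct Quaternion

/-!
If `F W` is not simple, pick a proper nonzero subobject `f : V ⟶ F W`. By adjunction `f` extends
to `ψ = (f, f ≫ ι) : E V ⟶ W` in `C`. Since `W` is simple and the image of any morphism of `C`
is `ι`-stable, every nonzero morphism into `W` is epi in `R`. So `ψ` is epi; and for a component
`(p, q)` of `ker ψ` we get `p ≫ f ≫ ι = q ≫ f`, so the extension of `p ≫ f` factors through the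
proper subobject `f` and must vanish, whence `ψ` is mono. Once `F W ≅ V ⊞ V`, a proper subobject
`V' ⊂ V` would give a proper `ι`-stable subobject `V' ⊞ V'` of `W`, so `V` is simple.
Finally `E V ≅ B (E V)` by conjugation `(x, y) ↦ (x, -y)`.
-/

lemma exists_mono_ne_zero_not_isIso {X : R} (hX : ¬ IsZero X) (hX' : ¬ Simple X) :
    ∃ (Y : R) (f : Y ⟶ X), Mono f ∧ f ≠ 0 ∧ ¬ IsIso f := by
  by_contra! h
  refine hX' ⟨fun {Y} f _ => ⟨fun _ hf => hX ?_, h Y f ‹_›⟩⟩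
  subst hf
  rw [IsZero.iff_id_eq_zero, ← IsIso.inv_hom_id (0 : Y ⟶ X), comp_zero]

namespace CObj

lemma comp_ι_ι (W : CObj R) {X : R} (f : X ⟶ W.V) : f ≫ W.ι ≫ W.ι = -f := by
  rw [W.hι]; simp

lemma not_isZero_V (W : CObj R) [Simple W] : ¬ IsZero W.V := fun h =>
  id_nonzero W (CObj.hom_ext (h.eq_of_src _ _))

lemma isIso_of_isIso_val {W₁ W₂ : CObj R} (φ : W₁ ⟶ W₂) [hφ : IsIso φ.1] : IsIso φ :=
  ⟨⟨⟨inv φ.1, by simp [IsIso.eq_inv_comp, ← Category.assoc, φ.2]⟩, by ext; simp, by ext; simp⟩⟩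

lemma isIso_of_mono_of_comp_ι (W : CObj R) [Simple W] {I : R} (m : I ⟶ W.V) [Mono m]
    (hm : m ≠ 0) (j : I ⟶ I) (hj : j ≫ m = m ≫ W.ι) : IsIso m := by
  have hj2 : j ≫ j = -𝟙 I := by
    rw [← cancel_mono m, Category.assoc, hj, ← Category.assoc, hj, Category.assoc, comp_ι_ι]
    simp
  let μ : (⟨I, j, hj2⟩ : CObj R) ⟶ W := ⟨m, hj⟩
  have : Mono μ := ⟨fun a b h => CObj.hom_ext ((cancel_mono m).1 (congrArg Subtype.val h))⟩
  have : IsIso μ := isIso_of_mono_of_nonzero fun h => hm (congrArg Subtype.val h)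
  exact (Ffunctor R).map_isIso μ

lemma epi_val_of_ne_zero {W' W : CObj R} [Simple W] (φ : W' ⟶ W) (hφ : φ ≠ 0) : Epi φ.1 := by
  have hι : image.ι φ.1 ≠ 0 := fun h =>
    hφ (CObj.hom_ext (by rw [← image.fac φ.1, h, comp_zero]; rfl))
  have := isIso_of_mono_of_comp_ι W _ hι _ (image.map_homMk'_ι φ.2)
  rw [← image.fac φ.1]
  exact epi_comp _ _

noncomputable def descE (W : CObj R) {V : R} (f : V ⟶ W.V) : (Efunctor R).obj V ⟶ W :=
  ⟨biprod.desc f (f ≫ W.ι), by apply biprod.hom_ext' <;> simp [Efunctor, comp_ι_ι]⟩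

lemma descE_ne_zero (W : CObj R) {V : R} {f : V ⟶ W.V} (hf : f ≠ 0) : W.descE f ≠ 0 :=
  fun h => hf <| by
    rw [← biprod.inl_desc f (f ≫ W.ι)]
    change biprod.inl ≫ (W.descE f).1 = 0
    rw [h]
    exact comp_zero

lemma epi_biprod_desc (W : CObj R) [Simple W] {V : R} {f : V ⟶ W.V} (hf : f ≠ 0) :
    Epi (biprod.desc f (f ≫ W.ι)) :=
  epi_val_of_ne_zero _ (W.descE_ne_zero hf)

lemma epi_of_comp_ι_factors (W : CObj R) [Simple W] {V X : R} (f : V ⟶ W.V) (a b : X ⟶ V)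
    (hab : a ≫ f ≫ W.ι = b ≫ f) (ha : a ≫ f ≠ 0) : Epi f := by
  have := W.epi_biprod_desc ha
  rw [show biprod.desc (a ≫ f) ((a ≫ f) ≫ W.ι) = biprod.desc a b ≫ f by
    ext <;> simp [hab]] at this
  exact epi_of_epi (biprod.desc a b) f

lemma isIso_biprod_desc (W : CObj R) [Simple W] {V : R} (f : V ⟶ W.V) [Mono f] (hf : f ≠ 0)
    (hnf : ¬ IsIso f) : IsIso (biprod.desc f (f ≫ W.ι)) := by
  have hnepi : ¬ Epi f := fun _ => hnf (isIso_of_mono_of_epi f)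
  have := W.epi_biprod_desc hf
  suffices Mono (biprod.desc f (f ≫ W.ι)) from isIso_of_mono_of_epi _
  apply Abelian.mono_of_kernel_ι_eq_zero
  set k := kernel.ι (biprod.desc f (f ≫ W.ι))
  have hker : (k ≫ biprod.fst) ≫ f + (k ≫ biprod.snd) ≫ f ≫ W.ι = 0 := by
    simpa [biprod.desc_eq] using kernel.condition (biprod.desc f (f ≫ W.ι))
  have hpq : (k ≫ biprod.fst) ≫ f ≫ W.ι = (k ≫ biprod.snd) ≫ f := by
    rw [← Category.assoc, eq_neg_of_add_eq_zero_left hker]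
    simp [comp_ι_ι]
  have hp : (k ≫ biprod.fst) ≫ f = 0 := by
    by_contra h
    exact hnepi (W.epi_of_comp_ι_factors f _ _ hpq h)
  have hq : (k ≫ biprod.snd) ≫ f = 0 := by rw [← hpq, ← Category.assoc, hp, zero_comp]
  ext
  · exact (cancel_mono f).1 (by simpa using hp)
  · exact (cancel_mono f).1 (by simpa using hq)

lemma simple_of_isIso_biprod_desc (W : CObj R) [Simple W] {V : R} (f : V ⟶ W.V) [Mono f]
    (hf : f ≠ 0) [IsIso (biprod.desc f (f ≫ W.ι))] : Simple V where
  mono_isIso_iff_nonzero {V'} g _ := by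
    refine ⟨fun _ hg => hf ?_, fun hg => ?_⟩
    · subst hg
      rw [← Category.id_comp f, ← IsIso.inv_hom_id (0 : V' ⟶ V), comp_zero, zero_comp]
    have := W.epi_biprod_desc (f := g ≫ f)
      fun h => hg ((cancel_mono f).1 (h.trans zero_comp.symm))
    rw [show biprod.desc (g ≫ f) ((g ≫ f) ≫ W.ι) = biprod.map g g ≫ biprod.desc f (f ≫ W.ι) by
      ext <;> simp, epi_comp_iff_of_isIso] at this
    have : Epi ((biprod.snd : V' ⊞ V' ⟶ V') ≫ g) := by
      rw [← biprod.map_snd g g]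
      exact epi_comp _ _
    have : Epi g := epi_of_epi (biprod.snd : V' ⊞ V' ⟶ V') g
    exact isIso_of_mono_of_epi g

end CObj

noncomputable def Efunctor.conjIso (V : R) :
    (Efunctor R).obj V ≅ (Bfunctor R).obj ((Efunctor R).obj V) where
  hom := ⟨biprod.map (𝟙 V) (-𝟙 V), by apply biprod.hom_ext' <;> simp [Efunctor, Bfunctor]⟩
  inv := ⟨biprod.map (𝟙 V) (-𝟙 V), by apply biprod.hom_ext' <;> simp [Efunctor, Bfunctor]⟩
  hom_inv_id := CObj.hom_ext (by apply biprod.hom_ext' <;> simp [Efunctor, Bfunctor])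
  inv_hom_id := CObj.hom_ext (by apply biprod.hom_ext' <;> simp [Efunctor, Bfunctor])

variable [EssentiallySmall.{v} R]

theorem statement5
    (W : CObj R) [Simple W] :
    Simple ((Ffunctor R).obj W) ∨
      ∃ V : R, Simple V ∧
        Nonempty ((Ffunctor R).obj W ≅ V ⊞ V) ∧
        Nonempty ((Efunctor R).obj V ≅ W) ∧
        Nonempty (W ≅ (Bfunctor R).obj W) := by
  by_cases hsimple : Simple ((Ffunctor R).obj W)
  · exact Or.inl hsimple
  obtain ⟨V, f, _, hf, hnf⟩ := exists_mono_ne_zero_not_isIso W.not_isZero_V hsimple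
  have := W.isIso_biprod_desc f hf hnf
  have : IsIso (W.descE f) := CObj.isIso_of_isIso_val _ (hφ := this)
  let e := asIso (W.descE f)
  exact Or.inr ⟨V, W.simple_of_isIso_biprod_desc f hf, ⟨((Ffunctor R).mapIso e).symm⟩, ⟨e⟩,
    ⟨e.symm ≪≫ Efunctor.conjIso V ≪≫ (Bfunctor R).mapIso e⟩⟩
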